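/- For n ∈ ℕ and j ∈ {0,...,N-1}, the operator s_j* χ_{[0,β_n]} s_j equals 0 if j > ξ_{n+1}, equals χ_{[0,β_{n+1}]} if j = ξ_{n+1}, and equals 1 if j < ξ_{n+1}, where ξ_k are the digits of the β-expansion of 1 and β_k = β^k - ξ_1β^{k-1} - ··· - ξ_k. -/

import Mathlib

open MeasureTheory
open scoped Classical

/-- The β-transformation `f_β(x) = βx - ⌊βx⌋`. -/
noncomputable def betaMap (β x : ℝ) : ℝ := β * x - ⌊β * x⌋

/-- `β₁ = β - ξ₁` where `ξ₁ = ⌈β⌉ - 1 = N - 1`. -/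
noncomputable def betaOne (β : ℝ) : ℝ := β - ((⌈β⌉₊ : ℝ) - 1)

/-- The affine branch `g_j(x) = (x+j)/β` of the inverse of `f_β`. -/
noncomputable def gBranch (β : ℝ) (j : ℕ) (x : ℝ) : ℝ := (x + j) / β

/-- The domain of the branch `g_j`: `[0,1]` for `j ≤ N-2` and `[0,β₁]` for `j = N-1`. -/
noncomputable def sDom (β : ℝ) (j : ℕ) : Set ℝ :=
  if j = ⌈β⌉₊ - 1 then Set.Icc 0 (betaOne β) else Set.Icc 0 1

/-- The (essential) range interval of `g_j` on its domain:
`[j/β, (j+1)/β)` for `j ≤ N-2` and `[(N-1)/β, 1)` for `j = N-1`. -/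
noncomputable def sRange (β : ℝ) (j : ℕ) : Set ℝ :=
  Set.Ico ((j : ℝ) / β) (min (((j : ℝ) + 1) / β) 1)

/-- The composition operator `T_{g_j}`, `(T_{g_j}ξ)(x) = ξ(g_j(x))` on the domain of
`g_j` and `0` outside it. -/
noncomputable def Tg (β : ℝ) (j : ℕ) (ξ : ℝ → ℂ) : ℝ → ℂ :=
  fun x => if x ∈ sDom β j then ξ (gBranch β j x) else 0

/-- The composition operator `T_{f_β}`, `(T_{f_β}ξ)(x) = ξ(f_β(x))` on `[0,1]`. -/
noncomputable def Tf (β : ℝ) (ξ : ℝ → ℂ) : ℝ → ℂ :=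
  fun x => if x ∈ Set.Icc (0 : ℝ) 1 then ξ (betaMap β x) else 0

/-- The partial isometry `s_j = (1/√β) T_{g_j}^*` on `L²([0,1])`, realized concretely:
`(s_jξ)(x) = √β · ξ(f_β(x))` for `x` in the range interval of `g_j`, and `0` elsewhere. -/
noncomputable def sOp (β : ℝ) (j : ℕ) (ξ : ℝ → ℂ) : ℝ → ℂ :=
  fun x => if x ∈ sRange β j then (Real.sqrt β : ℂ) * ξ (betaMap β x) else 0

/-- The adjoint `s_j^* = (1/√β) T_{g_j}`, realized concretely:
`(s_j^*ξ)(x) = (1/√β) · ξ(g_j(x))` on the domain of `g_j`, and `0` elsewhere. -/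
noncomputable def sStarOp (β : ℝ) (j : ℕ) (ξ : ℝ → ℂ) : ℝ → ℂ :=
  fun x => if x ∈ sDom β j then ((Real.sqrt β : ℂ))⁻¹ * ξ (gBranch β j x) else 0

/-- The quasi-greedy β-transformation `x ↦ βx - (⌈βx⌉ - 1)`. -/
noncomputable def qMap (β x : ℝ) : ℝ := β * x - (⌈β * x⌉ - 1)

/-- The `(n+1)`-st digit `ξ_{n+1}` of the β-expansion of `1`. -/
noncomputable def qDigit (β : ℝ) (n : ℕ) : ℤ := ⌈β * (qMap β)^[n] 1⌉ - 1

/-- `β_n = β^n - ξ_1 β^{n-1} - ⋯ - ξ_n`. -/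
noncomputable def betaSeq (β : ℝ) (n : ℕ) : ℝ :=
  β ^ n - ∑ j ∈ Finset.range n, (qDigit β j : ℝ) * β ^ (n - 1 - j)


section AuxForProof

lemma qMap_mem' (β t : ℝ) : 0 < qMap β t ∧ qMap β t ≤ 1 := by
  unfold qMap
  have h1 := Int.ceil_lt_add_one (β * t)
  have h2 := Int.le_ceil (β * t)
  constructor <;> linarith

lemma iter_mem' (β : ℝ) (n : ℕ) : 0 < (qMap β)^[n] 1 ∧ (qMap β)^[n] 1 ≤ 1 := by
  cases n with
  | zero => norm_num
  | succ n => rw [Function.iterate_succ_apply']; exact qMap_mem' β _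

lemma betaSeq_succ' (β : ℝ) (n : ℕ) :
    betaSeq β (n + 1) = β * betaSeq β n - qDigit β n := by
  unfold betaSeq
  rw [Finset.sum_range_succ]
  have h : ∀ m ∈ Finset.range n,
      (qDigit β m : ℝ) * β ^ (n + 1 - 1 - m) = β * ((qDigit β m : ℝ) * β ^ (n - 1 - m)) := by
    intro m hm
    rw [Finset.mem_range] at hm
    rw [show n + 1 - 1 - m = (n - 1 - m) + 1 by omega, pow_succ]
    ring
  rw [Finset.sum_congr rfl h, ← Finset.mul_sum, show n + 1 - 1 - n = 0 by omega]
  rw [pow_zero, pow_succ]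
  ring

lemma betaSeq_eq_iter' (β : ℝ) (n : ℕ) : betaSeq β n = (qMap β)^[n] 1 := by
  induction n with
  | zero => simp [betaSeq]
  | succ n ih =>
    rw [Function.iterate_succ_apply', betaSeq_succ', ih]
    have hq : qMap β ((qMap β)^[n] 1)
        = β * (qMap β)^[n] 1 - ((⌈β * (qMap β)^[n] 1⌉ : ℝ) - 1) := rfl
    rw [hq]
    unfold qDigit
    push_cast
    ring

lemma betaSeq_mem' (β : ℝ) (n : ℕ) : 0 < betaSeq β n ∧ betaSeq β n ≤ 1 := by
  rw [betaSeq_eq_iter']; exact iter_mem' β n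

lemma qDigit_nonneg' (β : ℝ) (hβ : 0 < β) (n : ℕ) : 0 ≤ qDigit β n := by
  unfold qDigit
  have h : 0 < β * (qMap β)^[n] 1 := mul_pos hβ (iter_mem' β n).1
  have := Int.ceil_pos.mpr h
  omega

lemma qDigit_le' (β : ℝ) (hβ : 1 < β) (n : ℕ) : qDigit β n ≤ (⌈β⌉₊ : ℤ) - 1 := by
  unfold qDigit
  have h1 : β * (qMap β)^[n] 1 ≤ β := by
    nlinarith [(iter_mem' β n).1, (iter_mem' β n).2]
  have h2 : ⌈β * (qMap β)^[n] 1⌉ ≤ ⌈β⌉ := Int.ceil_le_ceil h1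
  rw [Int.natCast_ceil_eq_ceil (by linarith : (0:ℝ) ≤ β)]
  omega

lemma betaSeq_succ_le_betaOne' (β : ℝ) (hβ : 1 < β) (n : ℕ)
    (h : qDigit β n = (⌈β⌉₊ : ℤ) - 1) : betaSeq β (n + 1) ≤ betaOne β := by
  have h1 := (betaSeq_mem' β n).2
  have h2 : (qDigit β n : ℝ) = (⌈β⌉₊ : ℝ) - 1 := by rw [h]; push_cast; ring
  rw [betaSeq_succ', h2]
  unfold betaOne
  nlinarith [(betaSeq_mem' β n).1]

lemma sStar_pointwise' (β : ℝ) (hβ : 1 < β) (n j : ℕ) (hj : j < ⌈β⌉₊) (ξ : ℝ → ℂ)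
    (x : ℝ) (hx0 : 0 < x) (hx1 : x < 1) (hxb : x ≠ betaOne β) :
    sStarOp β j (Set.indicator (Set.Icc (0 : ℝ) (betaSeq β n)) (sOp β j ξ)) x
      = if x ∈ sDom β j ∧ x + j ≤ β * betaSeq β n then ξ x else 0 := by
  have βpos : (0:ℝ) < β := by linarith
  have hceil1 : 1 ≤ ⌈β⌉₊ := by omega
  have hsq : (Real.sqrt β : ℂ) ≠ 0 := by
    simp [Real.sqrt_ne_zero'.mpr βpos]
  unfold sStarOp
  by_cases hdom : x ∈ sDom β j
  · have hlt : x + (j : ℝ) < β := by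
      by_cases hjN : j = ⌈β⌉₊ - 1
      · have hdom' : x ∈ Set.Icc 0 (betaOne β) := by
          rwa [sDom, if_pos hjN] at hdom
        have hxlt : x < betaOne β := lt_of_le_of_ne hdom'.2 hxb
        have hjr : (j : ℝ) = (⌈β⌉₊ : ℝ) - 1 := by
          subst hjN
          rw [Nat.cast_sub hceil1]; norm_num
        unfold betaOne at hxlt
        rw [hjr]; linarith
      · have hj2 : j + 2 ≤ ⌈β⌉₊ := by omega
        have hjr : ((j : ℝ) + 2) ≤ (⌈β⌉₊ : ℝ) := by exact_mod_cast hj2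
        have hcl : (⌈β⌉₊ : ℝ) < β + 1 := Nat.ceil_lt_add_one (by linarith)
        linarith
    have hrange : gBranch β j x ∈ sRange β j := by
      unfold gBranch sRange
      constructor
      · exact (div_le_div_iff_of_pos_right βpos).mpr (by linarith)
      · apply lt_min
        · exact (div_lt_div_iff_of_pos_right βpos).mpr (by linarith)
        · rw [div_lt_one βpos]
          exact hlt
    have hbm : betaMap β (gBranch β j x) = x := by
      unfold betaMap gBranch
      rw [mul_div_cancel₀ _ (ne_of_gt βpos)]
      have hfl : ⌊x + (j : ℝ)⌋ = (j : ℤ) := by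
        rw [Int.floor_add_natCast, Int.floor_eq_zero_iff.mpr ⟨hx0.le, hx1⟩]
        simp
      rw [hfl]
      push_cast
      ring
    rw [if_pos hdom]
    by_cases hcond : x + (j : ℝ) ≤ β * betaSeq β n
    · have hg : gBranch β j x ∈ Set.Icc 0 (betaSeq β n) := by
        constructor
        · unfold gBranch; positivity
        · unfold gBranch
          rw [div_le_iff₀ βpos]
          linarith
      have hc : x ∈ sDom β j ∧ x + (j : ℝ) ≤ β * betaSeq β n := ⟨hdom, hcond⟩
      rw [Set.indicator_of_mem hg]
      simp only [sOp]
      rw [if_pos hrange, hbm, if_pos hc, ← mul_assoc,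
        inv_mul_cancel₀ hsq, one_mul]
    · have hg : gBranch β j x ∉ Set.Icc 0 (betaSeq β n) := by
        intro hmem
        apply hcond
        have h2 := hmem.2
        unfold gBranch at h2
        rw [div_le_iff₀ βpos] at h2
        linarith
      rw [Set.indicator_of_notMem hg, mul_zero, if_neg (fun h => hcond h.2)]
  · rw [if_neg hdom, if_neg (fun h => hdom h.1)]

end AuxForProof

/-- `s_j^* χ_{[0,β_n]} s_j` equals `0` if `j > ξ_{n+1}`, equals
`χ_{[0,β_{n+1}]}` if `j = ξ_{n+1}`, and equals `1` if `j < ξ_{n+1}` (operator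
identities on `L²([0,1])`, i.e. a.e. on `[0,1]`). -/
theorem sStar_indicator_s (β : ℝ) (hβ : 1 < β) (n : ℕ) (j : ℕ) (hj : j < ⌈β⌉₊)
    (ξ : ℝ → ℂ) :
    ((j : ℤ) > qDigit β n →
      ∀ᵐ x ∂(volume.restrict (Set.Icc (0 : ℝ) 1)),
        sStarOp β j (Set.indicator (Set.Icc (0 : ℝ) (betaSeq β n)) (sOp β j ξ)) x
          = 0) ∧
    ((j : ℤ) = qDigit β n →
      ∀ᵐ x ∂(volume.restrict (Set.Icc (0 : ℝ) 1)),
        sStarOp β j (Set.indicator (Set.Icc (0 : ℝ) (betaSeq β n)) (sOp β j ξ)) x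
          = Set.indicator (Set.Icc (0 : ℝ) (betaSeq β (n + 1))) ξ x) ∧
    ((j : ℤ) < qDigit β n →
      ∀ᵐ x ∂(volume.restrict (Set.Icc (0 : ℝ) 1)),
        sStarOp β j (Set.indicator (Set.Icc (0 : ℝ) (betaSeq β n)) (sOp β j ξ)) x
          = ξ x)  := by
  have βpos : (0:ℝ) < β := by linarith
  have hceil1 : 1 ≤ ⌈β⌉₊ := by omega
  have hmem : ∀ᵐ x ∂(volume.restrict (Set.Icc (0 : ℝ) 1)), x ∈ Set.Icc (0 : ℝ) 1 :=
    ae_restrict_mem measurableSet_Icc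
  have hexc : ∀ᵐ x ∂(volume.restrict (Set.Icc (0 : ℝ) 1)),
      x ∉ ({0, 1, betaOne β} : Set ℝ) := by
    refine ae_restrict_of_ae ?_
    refine measure_eq_zero_iff_ae_notMem.mp ?_
    exact Set.Finite.measure_zero (Set.toFinite _) volume
  have hkey : β * betaSeq β n = betaSeq β (n + 1) + qDigit β n := by
    rw [betaSeq_succ']; ring
  have hp := (betaSeq_mem' β (n + 1)).1
  have hle1 := (betaSeq_mem' β (n + 1)).2
  refine ⟨?_, ?_, ?_⟩
  · intro h
    filter_upwards [hmem, hexc] with x hx hne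
    simp only [Set.mem_insert_iff, Set.mem_singleton_iff, not_or] at hne
    obtain ⟨h0, h1, hb⟩ := hne
    have hx0 : 0 < x := hx.1.lt_of_ne (Ne.symm h0)
    have hx1 : x < 1 := hx.2.lt_of_ne h1
    rw [sStar_pointwise' β hβ n j hj ξ x hx0 hx1 hb]
    rw [if_neg]
    rintro ⟨-, hc⟩
    have hq : qDigit β n + 1 ≤ (j : ℤ) := h
    have hqr : (qDigit β n : ℝ) + 1 ≤ (j : ℝ) := by exact_mod_cast hq
    linarith
  · intro h
    filter_upwards [hmem, hexc] with x hx hne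
    simp only [Set.mem_insert_iff, Set.mem_singleton_iff, not_or] at hne
    obtain ⟨h0, h1, hb⟩ := hne
    have hx0 : 0 < x := hx.1.lt_of_ne (Ne.symm h0)
    have hx1 : x < 1 := hx.2.lt_of_ne h1
    rw [sStar_pointwise' β hβ n j hj ξ x hx0 hx1 hb]
    have hqr : (qDigit β n : ℝ) = (j : ℝ) := by exact_mod_cast h.symm
    have hcond : x + (j : ℝ) ≤ β * betaSeq β n ↔ x ≤ betaSeq β (n + 1) := by
      rw [hkey, hqr]
      constructor <;> intro <;> linarith
    by_cases hxle : x ≤ betaSeq β (n + 1)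
    · have hdom : x ∈ sDom β j := by
        unfold sDom
        split_ifs with hjN
        · have hq' : qDigit β n = (⌈β⌉₊ : ℤ) - 1 := by
            rw [← h, hjN]
            push_cast [Nat.cast_sub hceil1]
            ring
          have := betaSeq_succ_le_betaOne' β hβ n hq'
          exact ⟨hx0.le, le_trans hxle this⟩
        · exact ⟨hx0.le, hx1.le⟩
      have hc : x ∈ sDom β j ∧ x + (j : ℝ) ≤ β * betaSeq β n :=
        ⟨hdom, hcond.mpr hxle⟩
      have hm : x ∈ Set.Icc (0 : ℝ) (betaSeq β (n + 1)) := ⟨hx0.le, hxle⟩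
      rw [if_pos hc, Set.indicator_of_mem hm]
    · rw [if_neg (fun hc => hxle (hcond.mp hc.2)),
        Set.indicator_of_notMem (fun hc => hxle hc.2)]
  · intro h
    filter_upwards [hmem, hexc] with x hx hne
    simp only [Set.mem_insert_iff, Set.mem_singleton_iff, not_or] at hne
    obtain ⟨h0, h1, hb⟩ := hne
    have hx0 : 0 < x := hx.1.lt_of_ne (Ne.symm h0)
    have hx1 : x < 1 := hx.2.lt_of_ne h1
    rw [sStar_pointwise' β hβ n j hj ξ x hx0 hx1 hb]
    have hjlt : (j : ℤ) + 1 ≤ qDigit β n := h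
    have hjr : (j : ℝ) + 1 ≤ (qDigit β n : ℝ) := by exact_mod_cast hjlt
    have hdom : x ∈ sDom β j := by
      unfold sDom
      rw [if_neg]
      · exact ⟨hx0.le, hx1.le⟩
      · intro hjN
        have := qDigit_le' β hβ n
        have hjz : (j : ℤ) = (⌈β⌉₊ : ℤ) - 1 := by
          rw [hjN]; push_cast [Nat.cast_sub hceil1]; ring
        omega
    have hc : x ∈ sDom β j ∧ x + (j : ℝ) ≤ β * betaSeq β n :=
      ⟨hdom, by linarith⟩
    rw [if_pos hc]
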